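/- Let k ≥ 1 and let e be any edge of the cycle graph C_{3k+1}. Then γst(C_{3k+1}/e) = γst(C_{3k+1}) − 1 = k; that is, the lower bound γst(G) − deg(u) − deg(v) + 3 for the strong domination number of an edge contraction is attained with equality for the cycles C_{3k+1}. -/

import Mathlib

open SimpleGraph

/-- The degree of a vertex, as the cardinality of its neighbor set. -/
noncomputable def sdeg {V : Type*} (G : SimpleGraph V) (v : V) : ℕ :=
  (G.neighborSet v).ncard

/-- `D` is a strong dominating set of `G` if every vertex outside `D` has a neighbor
in `D` of at least the same degree. -/
def IsStrongDominatingSet {V : Type*} (G : SimpleGraph V) (D : Set V) : Prop :=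
  ∀ x ∉ D, ∃ y ∈ D, G.Adj x y ∧ sdeg G x ≤ sdeg G y

/-- The strong domination number: minimum cardinality of a strong dominating set. -/
noncomputable def strongDominationNumber {V : Type*} (G : SimpleGraph V) : ℕ :=
  sInf {n | ∃ D : Set V, IsStrongDominatingSet G D ∧ D.ncard = n}

/-- Subdivision of the edge `uv` of `G`: delete `uv`, add a new vertex `none`
adjacent to `u` and `v`. -/
def subdivide {V : Type*} (G : SimpleGraph V) (u v : V) : SimpleGraph (Option V) :=
  SimpleGraph.fromRel (fun a b =>
    match a, b with
    | some x, some y => G.Adj x y ∧ ¬(s(x, y) = s(u, v))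
    | some x, none => x = u ∨ x = v
    | none, some _ => False
    | none, none => False)

/-- Contraction of the edge `uv` of `G`: the vertex `u` plays the role of the merged
vertex, and `v` is removed. -/
def contractEdge {V : Type*} (G : SimpleGraph V) (u v : V) :
    SimpleGraph {x : V // x ≠ v} :=
  SimpleGraph.fromRel (fun a b =>
    G.Adj a.1 b.1 ∨ (a.1 = u ∧ G.Adj v b.1) ∨ (b.1 = u ∧ G.Adj a.1 v))

/-- The corona product `G1 ∘ G2`: one copy of `G1` together with one copy of `G2`
for each vertex `i` of `G1`, where `i` is joined to all vertices of its copy. -/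
def corona {V1 V2 : Type*} (G1 : SimpleGraph V1) (G2 : SimpleGraph V2) :
    SimpleGraph (V1 ⊕ V1 × V2) :=
  SimpleGraph.fromRel (fun a b =>
    match a, b with
    | .inl a, .inl b => G1.Adj a b
    | .inl a, .inr (i, _) => a = i
    | .inr _, .inl _ => False
    | .inr (i, x), .inr (j, y) => i = j ∧ G2.Adj x y)

/-- The `k`-subdivision `G^{1/k}` of `G`: every edge is replaced by a path of length
`k`, the internal vertices of the path replacing `e` being indexed by `e` and a
position in `Fin (k-1)` (an orientation of `e` is chosen via `Quot.out`). -/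
noncomputable def kSubdivision {V : Type*} (G : SimpleGraph V) (k : ℕ) :
    SimpleGraph (V ⊕ G.edgeSet × Fin (k - 1)) :=
  SimpleGraph.fromRel (fun a b =>
    match a, b with
    | .inl x, .inl y => k ≤ 1 ∧ G.Adj x y
    | .inl x, .inr (e, i) =>
        (x = (Quot.out (e : Sym2 V)).1 ∧ (i : ℕ) = 0) ∨
        (x = (Quot.out (e : Sym2 V)).2 ∧ (i : ℕ) = k - 2)
    | .inr _, .inl _ => False
    | .inr (e, i), .inr (f, j) => e = f ∧ (j : ℕ) = (i : ℕ) + 1)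

/-!
The cycle `C_n` (`n ≥ 3`) is 2-regular, so strong domination there is plain domination. A
vertex dominates at most three vertices, which gives `γst(C_n) ≥ ⌈n/3⌉`, and every third vertex
attains the bound. Contracting an edge `uv` of `C_{n+1}` gives `C_n`: listing the surviving
vertices in cyclic order via `v.succAbove` identifies the contraction with the cycle on `Fin n`.
For `n = 3k` this drops `γst` from `k + 1` to `k`.
-/

section

variable {V W : Type*} {G : SimpleGraph V} {G' : SimpleGraph W}

lemma sdeg_eq_degree [Fintype V] [DecidableRel G.Adj] (v : V) : sdeg G v = G.degree v := by
  rw [sdeg, degree, neighborFinset_def, Set.ncard_eq_toFinset_card']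

lemma sdeg_map_iso (e : G ≃g G') (x : V) : sdeg G' (e x) = sdeg G x := by
  rw [sdeg, sdeg, ← Nat.card_coe_set_eq, ← Nat.card_coe_set_eq]
  exact Nat.card_congr (e.mapNeighborSet x).symm

lemma IsStrongDominatingSet.map_iso (e : G ≃g G') {D : Set V} (hD : IsStrongDominatingSet G D) :
    IsStrongDominatingSet G' (e '' D) := by
  intro x hx
  obtain ⟨y, hyD, hadj, hdeg⟩ := hD (e.symm x) fun h => hx ⟨e.symm x, h, e.apply_symm_apply x⟩
  refine ⟨e y, Set.mem_image_of_mem e hyD, ?_, ?_⟩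
  · simpa using e.map_adj_iff.mpr hadj
  · simpa [sdeg_map_iso] using hdeg

lemma strongDominationNumber_le_ncard {D : Set V} (hD : IsStrongDominatingSet G D) :
    strongDominationNumber G ≤ D.ncard :=
  Nat.sInf_le ⟨D, hD, rfl⟩

variable (G) in
lemma exists_isStrongDominatingSet_ncard_eq :
    ∃ D, IsStrongDominatingSet G D ∧ D.ncard = strongDominationNumber G :=
  Nat.sInf_mem (s := {n | ∃ D : Set V, IsStrongDominatingSet G D ∧ D.ncard = n})
    ⟨_, Set.univ, fun x hx => absurd (Set.mem_univ x) hx, rfl⟩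

lemma strongDominationNumber_le_of_iso (e : G ≃g G') :
    strongDominationNumber G' ≤ strongDominationNumber G := by
  obtain ⟨D, hD, hcard⟩ := exists_isStrongDominatingSet_ncard_eq G
  calc strongDominationNumber G' ≤ (e '' D).ncard := strongDominationNumber_le_ncard (hD.map_iso e)
    _ = strongDominationNumber G := by rw [Set.ncard_image_of_injective D e.injective, hcard]

lemma strongDominationNumber_eq_of_iso (e : G ≃g G') :
    strongDominationNumber G = strongDominationNumber G' :=
  le_antisymm (strongDominationNumber_le_of_iso e.symm) (strongDominationNumber_le_of_iso e)

lemma IsStrongDominatingSet.card_le_mul_ncard [Fintype V] [DecidableRel G.Adj] {d : ℕ}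
    (hG : ∀ v, G.degree v ≤ d) {D : Set V} (hD : IsStrongDominatingSet G D) :
    Fintype.card V ≤ (d + 1) * D.ncard := by
  classical
  have hcover : Finset.univ ⊆ D.toFinset.biUnion fun y => insert y (G.neighborFinset y) := by
    intro x _
    simp only [Finset.mem_biUnion, Set.mem_toFinset, Finset.mem_insert, mem_neighborFinset]
    by_cases hx : x ∈ D
    · exact ⟨x, hx, Or.inl rfl⟩
    · obtain ⟨y, hy, hxy, -⟩ := hD x hx
      exact ⟨y, hy, Or.inr hxy.symm⟩
  calc Fintype.card V ≤ (D.toFinset.biUnion fun y => insert y (G.neighborFinset y)).card :=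
        Finset.card_le_card hcover
    _ ≤ ∑ y ∈ D.toFinset, (insert y (G.neighborFinset y)).card := Finset.card_biUnion_le
    _ ≤ ∑ _y ∈ D.toFinset, (d + 1) := Finset.sum_le_sum fun y _ => by
        have := Finset.card_insert_le y (G.neighborFinset y)
        rw [card_neighborFinset_eq_degree] at this
        linarith [hG y]
    _ = (d + 1) * D.ncard := by
        rw [Finset.sum_const, smul_eq_mul, mul_comm, Set.ncard_eq_toFinset_card']

end

lemma cycleGraph_adj_iff_val {n : ℕ} {x y : Fin (n + 2)} :
    (cycleGraph (n + 2)).Adj x y ↔ x.val + 1 = y.val ∨ y.val + 1 = x.val ∨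
      (x.val = n + 1 ∧ y.val = 0) ∨ (y.val = n + 1 ∧ x.val = 0) := by
  have hsub : ∀ a b : Fin (n + 2),
      (a - b).val = 1 ↔ b.val + 1 = a.val ∨ (b.val = n + 1 ∧ a.val = 0) := by
    intro a b
    rcases le_or_gt b a with h | h
    · rw [Fin.sub_val_of_le h]; have := Fin.le_def.mp h; omega
    · rw [Fin.coe_sub_iff_lt.mpr h]; have := Fin.lt_def.mp h; omega
  rw [cycleGraph_adj', hsub, hsub]
  tauto

lemma sdeg_cycleGraph {n : ℕ} (x : Fin (n + 3)) : sdeg (cycleGraph (n + 3)) x = 2 := by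
  rw [sdeg_eq_degree, cycleGraph_degree_three_le]

lemma exists_isStrongDominatingSet_cycleGraph_ncard_eq (n : ℕ) :
    ∃ D : Set (Fin (n + 3)), IsStrongDominatingSet (cycleGraph (n + 3)) D ∧
      D.ncard = (n + 5) / 3 := by
  let f : Fin ((n + 5) / 3) → Fin (n + 3) := fun i => ⟨3 * i, by omega⟩
  have hf : Function.Injective f := fun i j h => Fin.ext (by simpa [f] using congrArg Fin.val h)
  refine ⟨Set.range f, ?_, by rw [Set.ncard_range_of_injective hf, Nat.card_eq_fintype_card,
    Fintype.card_fin]⟩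
  intro x hx
  have hx3 : x.val % 3 ≠ 0 := fun h =>
    hx ⟨⟨x.val / 3, by omega⟩, Fin.ext (by simp only [f]; omega)⟩
  obtain ⟨q, hq, hxq⟩ : ∃ q, ∃ hq : q < (n + 5) / 3, (cycleGraph (n + 3)).Adj x (f ⟨q, hq⟩) := by
    -- the neighbour `x - 1` or `x + 1`, or `0` when `x` is the last vertex
    simp only [cycleGraph_adj_iff_val, f]
    by_cases h1 : x.val % 3 = 1
    · exact ⟨x.val / 3, by omega, by omega⟩
    by_cases hlast : x.val + 1 < n + 3
    · exact ⟨x.val / 3 + 1, by omega, by omega⟩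
    · exact ⟨0, by omega, by omega⟩
  exact ⟨f ⟨q, hq⟩, ⟨_, rfl⟩, hxq, by rw [sdeg_cycleGraph, sdeg_cycleGraph]⟩

lemma strongDominationNumber_cycleGraph {n : ℕ} (hn : 3 ≤ n) :
    strongDominationNumber (cycleGraph n) = (n + 2) / 3 := by
  obtain ⟨m, rfl⟩ : ∃ m, n = m + 3 := ⟨n - 3, by omega⟩
  obtain ⟨D, hD, hcard⟩ := exists_isStrongDominatingSet_cycleGraph_ncard_eq m
  obtain ⟨D', hD', hcard'⟩ := exists_isStrongDominatingSet_ncard_eq (cycleGraph (m + 3))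
  have hupper := strongDominationNumber_le_ncard hD
  have hlower := hD'.card_le_mul_ncard fun v => (cycleGraph_degree_three_le (v := v)).le
  rw [Fintype.card_fin] at hlower
  omega

lemma Fin.val_succAbove_cases {n : ℕ} (p : Fin (n + 1)) (i : Fin n) :
    (p.succAbove i : ℕ) = i ∧ i.val < p.val ∨ (p.succAbove i : ℕ) = i + 1 ∧ p.val ≤ i.val := by
  rcases lt_or_ge i.castSucc p with h | h
  · exact Or.inl ⟨by rw [Fin.succAbove_of_castSucc_lt p i h, Fin.val_castSucc], h⟩
  · exact Or.inr ⟨by rw [Fin.succAbove_of_le_castSucc p i h, Fin.val_succ], h⟩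

lemma contractEdge_cycleGraph_adj_succAbove {n : ℕ} {u v : Fin (n + 3)}
    (huv : (cycleGraph (n + 3)).Adj u v) (i j : Fin (n + 2)) :
    (contractEdge (cycleGraph (n + 3)) u v).Adj ⟨v.succAbove i, v.succAbove_ne i⟩
      ⟨v.succAbove j, v.succAbove_ne j⟩ ↔ (cycleGraph (n + 2)).Adj i j := by
  -- Ascribed to `Fin (n + 3)` rather than `Fin (n + 2 + 1)`, so that `omega` matches these atoms
  -- with those of the goal.
  have hi : ((v.succAbove i : Fin (n + 3)) : ℕ) = i ∧ i.val < v.val ∨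
      ((v.succAbove i : Fin (n + 3)) : ℕ) = i + 1 ∧ v.val ≤ i.val := Fin.val_succAbove_cases v i
  have hj : ((v.succAbove j : Fin (n + 3)) : ℕ) = j ∧ j.val < v.val ∨
      ((v.succAbove j : Fin (n + 3)) : ℕ) = j + 1 ∧ v.val ≤ j.val := Fin.val_succAbove_cases v j
  simp only [contractEdge, fromRel_adj, ne_eq, Subtype.mk.injEq, Fin.ext_iff,
    cycleGraph_adj_iff_val] at huv ⊢
  rcases hi with ⟨hi, hiv⟩ | ⟨hi, hiv⟩ <;> rcases hj with ⟨hj, hjv⟩ | ⟨hj, hjv⟩ <;>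
    rw [hi, hj] <;> omega

def contractEdgeCycleGraphIso {n : ℕ} {u v : Fin (n + 3)} (huv : (cycleGraph (n + 3)).Adj u v) :
    cycleGraph (n + 2) ≃g contractEdge (cycleGraph (n + 3)) u v where
  toEquiv := finSuccAboveEquiv v
  map_rel_iff' {i j} := contractEdge_cycleGraph_adj_succAbove huv i j

lemma strongDominationNumber_contractEdge_cycleGraph {n : ℕ} (hn : 2 ≤ n) {u v : Fin (n + 1)}
    (huv : (cycleGraph (n + 1)).Adj u v) :
    strongDominationNumber (contractEdge (cycleGraph (n + 1)) u v) =
      strongDominationNumber (cycleGraph n) := by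
  obtain ⟨m, rfl⟩ : ∃ m, n = m + 2 := ⟨n - 2, by omega⟩
  exact (strongDominationNumber_eq_of_iso (contractEdgeCycleGraphIso huv)).symm

/-- For any edge `e = uv` of `C_{3k+1}` (`k ≥ 1`),
`γst(C_{3k+1}/e) = γst(C_{3k+1}) - 1 = k`. -/
theorem strongDominationNumber_cycle_contractEdge (k : ℕ) (hk : 1 ≤ k)
    (u v : Fin (3 * k + 1)) (huv : (SimpleGraph.cycleGraph (3 * k + 1)).Adj u v) :
    strongDominationNumber (contractEdge (SimpleGraph.cycleGraph (3 * k + 1)) u v) =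
      strongDominationNumber (SimpleGraph.cycleGraph (3 * k + 1)) - 1 ∧
    strongDominationNumber (SimpleGraph.cycleGraph (3 * k + 1)) - 1 = k := by
  rw [strongDominationNumber_contractEdge_cycleGraph (by omega) huv,
    strongDominationNumber_cycleGraph (by omega), strongDominationNumber_cycleGraph (by omega)]
  omega
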